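/- Let P be a finite set of points in the Euclidean plane and let (V, G) be a Steiner network for P whose length equals the Steiner minimal length of P. Suppose V = V₁ ∪ V₂ with V₁ ∩ V₂ = {p} for some point p ∈ V, suppose every edge of G joins two vertices of V₁ or two vertices of V₂, and suppose the subgraphs G₁ and G₂ of G induced on V₁ and V₂ are each connected. Then (V₂, G₂) is a Steiner network for (P ∩ V₂) ∪ {p} whose length equals the Steiner minimal length of (P ∩ V₂) ∪ {p}; that is, the length of G₂ is at most the length of every Steiner network for (P ∩ V₂) ∪ {p}. -/

import Mathlib

/-!
Write `L(H)` for the length of a graph `H`. Since `V₁` and `V₂` share only the point `p`,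
the induced graphs `G₁` and `G₂` have no common edge, so `L(G₁) + L(G₂) ≤ L(G)`.
Given any Steiner network `M` for `(P ∩ V₂) ∪ {p}`, gluing `G₁` and `M` at `p` gives a
Steiner network for `P` of length at most `L(G₁) + L(M)`. Since `G` is minimal,
`L(G₁) + L(G₂) ≤ L(G) ≤ L(G₁) + L(M)`, that is, `L(G₂) ≤ L(M)`.
-/

open Real EuclideanGeometry
open scoped Classical

noncomputable section

abbrev Pt : Type := EuclideanSpace ℝ (Fin 2)

/-- A Steiner network for a finite set `P` of points in the plane: a finite set `V` of
points containing `P`, together with a connected simple graph on `V`. -/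
structure SteinerNetwork (P : Finset Pt) where
  V : Finset Pt
  terminals_subset : P ⊆ V
  G : SimpleGraph V
  connected : G.Connected

/-- The total Euclidean length of a graph on a finite set of points in the plane. -/
noncomputable def graphLength {W : Finset Pt} (H : SimpleGraph W) : ℝ := by
  classical
  exact ∑ e ∈ H.edgeFinset,
    Sym2.lift ⟨fun (u v : W) => dist (u : Pt) (v : Pt), fun _ _ => dist_comm _ _⟩ e

/-- The length of a Steiner network. -/
noncomputable def SteinerNetwork.length {P : Finset Pt} (N : SteinerNetwork P) : ℝ :=
  graphLength N.G

/-- The Steiner minimal length of a finite set of points in the plane. -/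
noncomputable def steinerMinLength (P : Finset Pt) : ℝ :=
  sInf (Set.range fun N : SteinerNetwork P => N.length)


/-- The subgraph of a Steiner network induced on a subset `W` of its vertices. -/
def inducedOn {P : Finset Pt} (N : SteinerNetwork P) (W : Finset Pt)
    (hW : W ⊆ N.V) : SimpleGraph W where
  Adj a b := N.G.Adj ⟨(a : Pt), hW a.2⟩ ⟨(b : Pt), hW b.2⟩
  symm := ⟨fun _ _ h => N.G.adj_symm h⟩
  loopless := ⟨fun _ h => N.G.irrefl h⟩

def edgeLength : Sym2 Pt → ℝ :=
  Sym2.lift ⟨fun x y : Pt => dist x y, dist_comm⟩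

lemma edgeLength_nonneg (e : Sym2 Pt) : 0 ≤ edgeLength e := by
  induction e using Sym2.ind with
  | _ x y => exact @dist_nonneg Pt _ x y

def pointEdges {W : Finset Pt} (H : SimpleGraph W) : Finset (Sym2 Pt) :=
  H.edgeFinset.map (Function.Embedding.subtype (· ∈ W)).sym2Map

section PointEdges

variable {W W₁ W₂ : Finset Pt}

lemma mk_mem_pointEdges (H : SimpleGraph W) {x y : Pt} :
    s(x, y) ∈ pointEdges H ↔ ∃ (hx : x ∈ W) (hy : y ∈ W), H.Adj ⟨x, hx⟩ ⟨y, hy⟩ := by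
  constructor
  · intro h
    obtain ⟨e, he, hxy⟩ := Finset.mem_map.1 h
    induction e using Sym2.ind with
    | _ a b =>
      rw [SimpleGraph.mem_edgeFinset, SimpleGraph.mem_edgeSet] at he
      rcases Sym2.eq_iff.1 hxy with ⟨rfl, rfl⟩ | ⟨rfl, rfl⟩
      exacts [⟨a.2, b.2, he⟩, ⟨b.2, a.2, he.symm⟩]
  · rintro ⟨hx, hy, hxy⟩
    exact Finset.mem_map.2 ⟨s(⟨x, hx⟩, ⟨y, hy⟩), by simpa using hxy, rfl⟩

lemma graphLength_eq_sum_pointEdges (H : SimpleGraph W) :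
    graphLength H = ∑ e ∈ pointEdges H, edgeLength e := by
  rw [pointEdges, Finset.sum_map, graphLength]
  refine Finset.sum_congr rfl fun e _ => ?_
  induction e using Sym2.ind with
  | _ x y => rfl

lemma graphLength_nonneg (H : SimpleGraph W) : 0 ≤ graphLength H := by
  rw [graphLength_eq_sum_pointEdges]
  exact Finset.sum_nonneg fun e _ => edgeLength_nonneg e

lemma graphLength_add_le {H₁ : SimpleGraph W₁} {H₂ : SimpleGraph W₂} {H : SimpleGraph W}
    (h₁ : pointEdges H₁ ⊆ pointEdges H) (h₂ : pointEdges H₂ ⊆ pointEdges H)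
    (hd : Disjoint (pointEdges H₁) (pointEdges H₂)) :
    graphLength H₁ + graphLength H₂ ≤ graphLength H := by
  simp only [graphLength_eq_sum_pointEdges]
  rw [← Finset.sum_union hd]
  exact Finset.sum_le_sum_of_subset_of_nonneg (Finset.union_subset h₁ h₂)
    fun e _ _ => edgeLength_nonneg e

lemma graphLength_le_add {H₁ : SimpleGraph W₁} {H₂ : SimpleGraph W₂} {H : SimpleGraph W}
    (h : pointEdges H ⊆ pointEdges H₁ ∪ pointEdges H₂) :
    graphLength H ≤ graphLength H₁ + graphLength H₂ := by
  simp only [graphLength_eq_sum_pointEdges]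
  calc ∑ e ∈ pointEdges H, edgeLength e
      ≤ ∑ e ∈ pointEdges H₁ ∪ pointEdges H₂, edgeLength e :=
        Finset.sum_le_sum_of_subset_of_nonneg h fun e _ _ => edgeLength_nonneg e
    _ ≤ ∑ e ∈ pointEdges H₁ ∪ pointEdges H₂, edgeLength e
          + ∑ e ∈ pointEdges H₁ ∩ pointEdges H₂, edgeLength e :=
        le_add_of_nonneg_right (Finset.sum_nonneg fun e _ => edgeLength_nonneg e)
    _ = _ := Finset.sum_union_inter

/-- An edge has two distinct endpoints, so it cannot lie in two vertex sets meeting in at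
most one point. -/
lemma disjoint_pointEdges (H₁ : SimpleGraph W₁) (H₂ : SimpleGraph W₂)
    (h : (↑(W₁ ∩ W₂) : Set Pt).Subsingleton) : Disjoint (pointEdges H₁) (pointEdges H₂) := by
  rw [Finset.disjoint_left]
  intro e he₁ he₂
  induction e using Sym2.ind with
  | _ x y =>
    obtain ⟨hx₁, hy₁, hxy⟩ := (mk_mem_pointEdges H₁).1 he₁
    obtain ⟨hx₂, hy₂, -⟩ := (mk_mem_pointEdges H₂).1 he₂
    have : x = y := h (by simp [hx₁, hx₂]) (by simp [hy₁, hy₂])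
    subst this
    exact H₁.irrefl hxy

lemma pointEdges_inducedOn_subset {P : Finset Pt} (N : SteinerNetwork P) (hW : W ⊆ N.V) :
    pointEdges (inducedOn N W hW) ⊆ pointEdges N.G := by
  intro e he
  induction e using Sym2.ind with
  | _ x y =>
    obtain ⟨hx, hy, hxy⟩ := (mk_mem_pointEdges _).1 he
    exact (mk_mem_pointEdges _).2 ⟨hW hx, hW hy, hxy⟩

def glue (H₁ : SimpleGraph W₁) (H₂ : SimpleGraph W₂) : SimpleGraph ↥(W₁ ∪ W₂) where
  Adj a b := (∃ (ha : (a : Pt) ∈ W₁) (hb : (b : Pt) ∈ W₁), H₁.Adj ⟨a, ha⟩ ⟨b, hb⟩) ∨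
    (∃ (ha : (a : Pt) ∈ W₂) (hb : (b : Pt) ∈ W₂), H₂.Adj ⟨a, ha⟩ ⟨b, hb⟩)
  symm := ⟨fun _ _ h => by
    rcases h with ⟨ha, hb, h⟩ | ⟨ha, hb, h⟩
    exacts [Or.inl ⟨hb, ha, h.symm⟩, Or.inr ⟨hb, ha, h.symm⟩]⟩
  loopless := ⟨fun _ h => by
    rcases h with ⟨_, _, h⟩ | ⟨_, _, h⟩
    exacts [H₁.irrefl h, H₂.irrefl h]⟩

lemma pointEdges_glue_subset (H₁ : SimpleGraph W₁) (H₂ : SimpleGraph W₂) :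
    pointEdges (glue H₁ H₂) ⊆ pointEdges H₁ ∪ pointEdges H₂ := by
  intro e he
  induction e using Sym2.ind with
  | _ x y =>
    obtain ⟨_, _, hxy⟩ := (mk_mem_pointEdges _).1 he
    rcases hxy with ⟨hx, hy, h⟩ | ⟨hx, hy, h⟩
    · exact Finset.mem_union_left _ ((mk_mem_pointEdges _).2 ⟨hx, hy, h⟩)
    · exact Finset.mem_union_right _ ((mk_mem_pointEdges _).2 ⟨hx, hy, h⟩)

lemma glue_connected {H₁ : SimpleGraph W₁} {H₂ : SimpleGraph W₂}
    (h₁ : H₁.Connected) (h₂ : H₂.Connected) (hW : (W₁ ∩ W₂).Nonempty) :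
    (glue H₁ H₂).Connected := by
  obtain ⟨p, hp⟩ := hW
  obtain ⟨hp₁, hp₂⟩ := Finset.mem_inter.1 hp
  let p' : ↥(W₁ ∪ W₂) := ⟨p, Finset.mem_union_left _ hp₁⟩
  let f₁ : H₁ →g glue H₁ H₂ :=
    ⟨fun a => ⟨a, Finset.mem_union_left _ a.2⟩, fun {a b} h => Or.inl ⟨a.2, b.2, h⟩⟩
  let f₂ : H₂ →g glue H₁ H₂ :=
    ⟨fun a => ⟨a, Finset.mem_union_right _ a.2⟩, fun {a b} h => Or.inr ⟨a.2, b.2, h⟩⟩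
  have hreach : ∀ u, (glue H₁ H₂).Reachable u p' := by
    rintro ⟨u, hu⟩
    rcases Finset.mem_union.1 hu with hu | hu
    · exact (h₁.preconnected ⟨u, hu⟩ ⟨p, hp₁⟩).map f₁
    · exact (h₂.preconnected ⟨u, hu⟩ ⟨p, hp₂⟩).map f₂
  exact (SimpleGraph.connected_iff _).2
    ⟨fun u v => (hreach u).trans (hreach v).symm, ⟨p'⟩⟩

end PointEdges

lemma steinerMinLength_le {P : Finset Pt} (N : SteinerNetwork P) :
    steinerMinLength P ≤ N.length :=
  csInf_le ⟨0, by rintro _ ⟨K, rfl⟩; exact graphLength_nonneg K.G⟩ ⟨N, rfl⟩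

lemma steinerMinLength_le_graphLength_add {P Q W : Finset Pt} {H : SimpleGraph W}
    (hH : H.Connected) (M : SteinerNetwork Q) (hW : (W ∩ M.V).Nonempty) (hP : P ⊆ W ∪ Q) :
    steinerMinLength P ≤ graphLength H + M.length :=
  (steinerMinLength_le
    { V := W ∪ M.V
      terminals_subset := hP.trans (Finset.union_subset_union le_rfl M.terminals_subset)
      G := glue H M.G
      connected := glue_connected hH M.connected hW }).trans
    (graphLength_le_add (pointEdges_glue_subset H M.G))

theorem induced_part_is_minimal_general (P : Finset Pt) (N : SteinerNetwork P)
    (hmin : N.length = steinerMinLength P)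
    (V₁ V₂ : Finset Pt) (p : Pt)
    (hunion : N.V = V₁ ∪ V₂) (hinter : V₁ ∩ V₂ = {p})
    (h1 : V₁ ⊆ N.V) (h2 : V₂ ⊆ N.V)
    (hG1 : (inducedOn N V₁ h1).Connected) :
    (P ∩ V₂ ∪ {p}) ⊆ V₂ ∧
      ∀ M : SteinerNetwork (P ∩ V₂ ∪ {p}),
        graphLength (inducedOn N V₂ h2) ≤ M.length := by
  have hp : p ∈ V₁ ∩ V₂ := hinter ▸ Finset.mem_singleton_self p
  refine ⟨Finset.union_subset Finset.inter_subset_right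
    (Finset.singleton_subset_iff.2 (Finset.mem_inter.1 hp).2), fun M => ?_⟩
  have hsplit : graphLength (inducedOn N V₁ h1) + graphLength (inducedOn N V₂ h2) ≤ N.length :=
    graphLength_add_le (pointEdges_inducedOn_subset N h1) (pointEdges_inducedOn_subset N h2)
      (disjoint_pointEdges _ _ (by simp [hinter]))
  have hpM : p ∈ M.V := M.terminals_subset (by simp)
  have hP : P ⊆ V₁ ∪ (P ∩ V₂ ∪ {p}) := by
    intro x hx
    have hx' := hunion ▸ N.terminals_subset hx
    simp only [Finset.mem_union, Finset.mem_inter] at hx' ⊢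
    tauto
  have hexchange := steinerMinLength_le_graphLength_add hG1 M
    ⟨p, Finset.mem_inter.2 ⟨(Finset.mem_inter.1 hp).1, hpM⟩⟩ hP
  linarith

/-- If a minimal-length Steiner network for `P` splits as `V = V₁ ∪ V₂` with
`V₁ ∩ V₂ = {p}`, with every edge inside `V₁` or inside `V₂` and both induced
subgraphs connected, then the induced subgraph on `V₂` is a Steiner network for
`(P ∩ V₂) ∪ {p}` of minimal length. -/
theorem induced_part_is_minimal (P : Finset Pt) (N : SteinerNetwork P)
    (hmin : N.length = steinerMinLength P)
    (V₁ V₂ : Finset Pt) (p : Pt) (hp : p ∈ N.V)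
    (hunion : N.V = V₁ ∪ V₂) (hinter : V₁ ∩ V₂ = {p})
    (h1 : V₁ ⊆ N.V) (h2 : V₂ ⊆ N.V)
    (hedges : ∀ u v : N.V, N.G.Adj u v →
      (((u : Pt) ∈ V₁ ∧ (v : Pt) ∈ V₁) ∨ ((u : Pt) ∈ V₂ ∧ (v : Pt) ∈ V₂)))
    (hG1 : (inducedOn N V₁ h1).Connected) (hG2 : (inducedOn N V₂ h2).Connected) :
    (P ∩ V₂ ∪ {p}) ⊆ V₂ ∧
      ∀ M : SteinerNetwork (P ∩ V₂ ∪ {p}),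
        graphLength (inducedOn N V₂ h2) ≤ M.length :=
  induced_part_is_minimal_general P N hmin V₁ V₂ p hunion hinter h1 h2 hG1
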